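/- Let G be a bi-block graph in class B (each block has at most two cut-vertices) and T_G its associated tree. Then T_G is a tree, and for all vertices a, b of T_G, the distance between a and b in T_G equals their distance in G. -/

import Mathlib

open SimpleGraph

variable {V : Type*}

/-- `v` is a cut-vertex of the graph `G`: deleting `v` disconnects `G`. -/
def CutVtx (G : SimpleGraph V) (v : V) : Prop :=
  ¬ (G.induce {v}ᶜ).Connected

/-- A nonseparable graph: connected and with no cut-vertex. -/
def NoCutVtx {W : Type*} (H : SimpleGraph W) : Prop :=
  H.Connected ∧ ∀ w : W, (H.induce {w}ᶜ).Connected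

/-- `B` is (the vertex set of) a block of `G`: a maximal nonseparable
induced subgraph. -/
def IsBlockSet (G : SimpleGraph V) (B : Set V) : Prop :=
  NoCutVtx (G.induce B) ∧ ∀ C : Set V, B ⊆ C → NoCutVtx (G.induce C) → B = C

/-- The set of cut-vertices of `G`. -/
def cutSet (G : SimpleGraph V) : Set V := {v | CutVtx G v}

/-- The set `B` induces a complete bipartite graph in `G` with
bipartition `(V1, V2)`. -/
def CompBipOn (G : SimpleGraph V) (B V1 V2 : Set V) : Prop :=
  V1.Nonempty ∧ V2.Nonempty ∧ Disjoint V1 V2 ∧ V1 ∪ V2 = B ∧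
    ∀ x ∈ B, ∀ y ∈ B, (G.Adj x y ↔ (x ∈ V1 ∧ y ∈ V2) ∨ (x ∈ V2 ∧ y ∈ V1))

/-- A bi-block graph: a connected graph all of whose blocks are
complete bipartite. -/
def BiBlockGraph (G : SimpleGraph V) : Prop :=
  G.Connected ∧ ∀ B : Set V, IsBlockSet G B → ∃ V1 V2 : Set V, CompBipOn G B V1 V2

/-- The class 𝓑: bi-block graphs with at least two blocks and at most two
cut-vertices in each block. -/
def ClassB (G : SimpleGraph V) : Prop :=
  BiBlockGraph G ∧
  (∃ B1 B2 : Set V, IsBlockSet G B1 ∧ IsBlockSet G B2 ∧ B1 ≠ B2) ∧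
  ∀ B : Set V, IsBlockSet G B → (B ∩ cutSet G).ncard ≤ 2

/-- `S` is an admissible vertex set for the associated tree `T_G`:
it contains all cut-vertices of `G`, both vertices of every `K_{1,1}` block,
exactly one non-cut-vertex from each partite set of every leaf block,
exactly one non-cut-vertex from the cut-vertex-free partite set of every
bridge block whose two cut-vertices share a partite set, and no other
vertices. -/
def AssocSet (G : SimpleGraph V) (S : Set V) : Prop :=
  (∀ v, CutVtx G v → v ∈ S) ∧
  ∀ B V1 V2 : Set V, IsBlockSet G B → CompBipOn G B V1 V2 →
    ((V1.ncard = 1 ∧ V2.ncard = 1) → B ⊆ S) ∧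
    (¬ (V1.ncard = 1 ∧ V2.ncard = 1) →
      (((B ∩ cutSet G).ncard = 1) →
          (S ∩ (V1 \ cutSet G)).ncard = 1 ∧ (S ∩ (V2 \ cutSet G)).ncard = 1) ∧
      (((B ∩ cutSet G).ncard = 2) →
          (((V1 ∩ cutSet G).ncard = 2) →
              (S ∩ (V2 \ cutSet G)).ncard = 1 ∧ S ∩ (V1 \ cutSet G) = ∅) ∧
          (((V2 ∩ cutSet G).ncard = 2) →
              (S ∩ (V1 \ cutSet G)).ncard = 1 ∧ S ∩ (V2 \ cutSet G) = ∅) ∧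
          (((V1 ∩ cutSet G).ncard = 1 ∧ (V2 ∩ cutSet G).ncard = 1) →
              S ∩ (B \ cutSet G) = ∅)))

/-- The eccentricity of a vertex. -/
noncomputable def ecc (G : SimpleGraph V) (v : V) : ℕ := sSup (Set.range (G.dist v))

/-- The diameter of a graph. -/
noncomputable def gdiam (G : SimpleGraph V) : ℕ := sSup (Set.range (ecc G))

/-- The radius of a graph. -/
noncomputable def gradius (G : SimpleGraph V) : ℕ := sInf (Set.range (ecc G))

/-- The center of a graph: vertices of minimum eccentricity. -/
noncomputable def gcenter (G : SimpleGraph V) : Set V := {v | ecc G v = gradius G}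

/-- The eccentricity matrix of `G`. -/
noncomputable def eccMatrix (G : SimpleGraph V) : Matrix V V ℝ := fun u v =>
  if G.dist u v = min (ecc G u) (ecc G v) then (G.dist u v : ℝ) else 0

/-- The spectrum of the eccentricity matrix of `G` is symmetric with respect
to the origin: `μ` is an eigenvalue with multiplicity `l` iff `-μ` is. -/
def SpectrumSymm [Fintype V] [DecidableEq V] (G : SimpleGraph V) : Prop :=
  ∀ (hH : (eccMatrix G).IsHermitian) (μ : ℝ),
    {i | hH.eigenvalues i = μ}.ncard = {i | hH.eigenvalues i = -μ}.ncard

/-- A vertex is diametrically distinguished if it lies on some diametrical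
path and is adjacent to some central vertex. -/
noncomputable def DiamDistinguished (G : SimpleGraph V) (u : V) : Prop :=
  (∃ (a b : V) (p : G.Walk a b), p.IsPath ∧ p.length = G.dist a b ∧
      G.dist a b = gdiam G ∧ u ∈ p.support) ∧
  ∃ z ∈ gcenter G, G.Adj u z

/-!
Every cycle of `G` spans a nonseparable set, hence lies in a single block. In a block with
partite sets `V₁, V₂`, the set `S` meets both parts and meets one of them in exactly one vertex,
so `G[S]` contains no cycle, since a cycle in a complete bipartite block uses two vertices of
each part. For distances, induct on `d_G(a, b)`: two vertices of a common block are at distance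
`1` or `2`, and in the latter case `S` contains a common neighbour from the other part; otherwise
any geodesic from `a` to `b` leaves the block of its first edge through an interior cut-vertex,
which belongs to `S` and splits the geodesic.
-/

variable {G : SimpleGraph V}

/-- `NoCutVtx (G.induce A)`, with the vertex deletions carried out inside `V`. -/
def IsNonsepSet (G : SimpleGraph V) (A : Set V) : Prop :=
  (G.induce A).Connected ∧ ∀ w ∈ A, (G.induce (A \ {w})).Connected

def induceSdiffSingletonIso {A : Set V} {w : V} (hw : w ∈ A) :
    (G.induce A).induce {(⟨w, hw⟩ : A)}ᶜ ≃g G.induce (A \ {w}) where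
  toFun x := ⟨x.1.1, x.1.2, fun h => x.2 (Subtype.ext h)⟩
  invFun y := ⟨⟨y.1, y.2.1⟩, fun h => y.2.2 (congrArg Subtype.val h)⟩
  left_inv _ := rfl
  right_inv _ := rfl
  map_rel_iff' := Iff.rfl

lemma noCutVtx_induce_iff {A : Set V} : NoCutVtx (G.induce A) ↔ IsNonsepSet G A :=
  and_congr_right' ⟨fun h w hw => (induceSdiffSingletonIso hw).connected_iff.mp (h ⟨w, hw⟩),
    fun h w => (induceSdiffSingletonIso w.2).connected_iff.mpr (h w w.2)⟩

lemma IsNonsepSet.connected_induce_sdiff_singleton {A : Set V} (hA : IsNonsepSet G A) (w : V) :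
    (G.induce (A \ {w})).Connected := by
  by_cases hw : w ∈ A
  · exact hA.2 w hw
  · rw [Set.sdiff_singleton_eq_self hw]
    exact hA.1

lemma IsNonsepSet.union {A B : Set V} (hA : IsNonsepSet G A) (hB : IsNonsepSet G B) {x y : V}
    (hxy : x ≠ y) (hx : x ∈ A ∩ B) (hy : y ∈ A ∩ B) : IsNonsepSet G (A ∪ B) := by
  refine ⟨induce_union_connected hA.1.preconnected hB.1.preconnected ⟨x, hx⟩, fun w _ => ?_⟩
  obtain ⟨z, hz, hzw⟩ : ∃ z ∈ A ∩ B, z ≠ w := by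
    rcases eq_or_ne x w with rfl | hxw
    exacts [⟨y, hy, hxy.symm⟩, ⟨x, hx, hxw⟩]
  rw [Set.union_sdiff_distrib]
  exact induce_union_connected (hA.connected_induce_sdiff_singleton w).preconnected
    (hB.connected_induce_sdiff_singleton w).preconnected ⟨z, ⟨hz.1, hzw⟩, hz.2, hzw⟩

lemma isNonsepSet_pair {x y : V} (h : G.Adj x y) : IsNonsepSet G {x, y} := by
  refine ⟨induce_pair_connected_of_adj h, fun w hw => ?_⟩
  rcases hw with rfl | rfl
  · rw [Set.pair_sdiff_left h.ne, induce_singleton_eq_top]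
    exact connected_top
  · rw [Set.pair_sdiff_right h.ne, induce_singleton_eq_top]
    exact connected_top

lemma SimpleGraph.Walk.IsPath.connected_induce_support_sdiff_start {u v : V} {p : G.Walk u v}
    (hp : p.IsPath) (huv : u ≠ v) : (G.induce ({z | z ∈ p.support} \ {u})).Connected := by
  cases p with
  | nil => exact absurd rfl huv
  | cons h q =>
    have hu : u ∉ q.support := ((Walk.cons_isPath_iff h q).mp hp).2
    have hset : {z | z ∈ (Walk.cons h q).support} \ {u} = {z | z ∈ q.support} := by
      ext z
      simp only [Walk.support_cons, List.mem_cons, Set.mem_sdiff, Set.mem_ofPred_eq,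
        Set.mem_singleton_iff]
      exact ⟨fun ⟨hz, hzu⟩ => hz.resolve_left hzu, fun hz => ⟨Or.inr hz, fun h => hu (h ▸ hz)⟩⟩
    rw [hset]
    exact q.connected_induce_support

lemma SimpleGraph.Walk.IsCycle.isNonsepSet_support {v : V} {c : G.Walk v v} (hc : c.IsCycle) :
    IsNonsepSet G {z | z ∈ c.support} := by
  classical
  refine ⟨c.connected_induce_support, fun w hw => ?_⟩
  have hsupp : {z | z ∈ c.support} = {z | z ∈ (c.rotate w hw).support} :=
    Set.ext fun z => (c.mem_support_rotate_iff w hw).symm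
  have hrot := hc.rotate hw
  rw [hsupp]
  generalize c.rotate w hw = d at hrot
  cases d with
  | nil => exact absurd hrot Walk.not_isCycle_nil
  | cons h r =>
    have hr := ((Walk.cons_isCycle_iff r h).mp hrot).1
    have hset : {z | z ∈ (Walk.cons h r).support} \ {w} = {z | z ∈ r.reverse.support} \ {w} := by
      ext z
      simp only [Walk.support_cons, Walk.support_reverse, List.mem_cons, List.mem_reverse,
        Set.mem_sdiff, Set.mem_ofPred_eq, Set.mem_singleton_iff]
      exact ⟨fun ⟨hz, hzw⟩ => ⟨hz.resolve_left hzw, hzw⟩, fun ⟨hz, hzw⟩ => ⟨Or.inr hz, hzw⟩⟩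
    rw [hset]
    exact hr.reverse.connected_induce_support_sdiff_start h.ne

lemma IsBlockSet.isNonsepSet {B : Set V} (hB : IsBlockSet G B) : IsNonsepSet G B :=
  noCutVtx_induce_iff.mp hB.1

lemma exists_isBlockSet_superset [Finite V] {A : Set V} (hA : IsNonsepSet G A) :
    ∃ B, A ⊆ B ∧ IsBlockSet G B := by
  have hfin : {C : Set V | A ⊆ C ∧ IsNonsepSet G C}.Finite := Set.toFinite _
  obtain ⟨B, ⟨hAB, hB⟩, hmax⟩ := hfin.exists_maximalFor id _ ⟨A, subset_rfl, hA⟩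
  exact ⟨B, hAB, noCutVtx_induce_iff.mpr hB, fun C hBC hC =>
    hBC.antisymm (hmax ⟨hAB.trans hBC, noCutVtx_induce_iff.mp hC⟩ hBC)⟩

lemma exists_isBlockSet_of_adj [Finite V] {x y : V} (h : G.Adj x y) :
    ∃ B, IsBlockSet G B ∧ x ∈ B ∧ y ∈ B := by
  obtain ⟨B, hsub, hB⟩ := exists_isBlockSet_superset (isNonsepSet_pair h)
  exact ⟨B, hB, hsub (by simp), hsub (by simp)⟩

lemma IsBlockSet.eq_of_two_mem {B₁ B₂ : Set V} (h₁ : IsBlockSet G B₁) (h₂ : IsBlockSet G B₂)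
    {x y : V} (hxy : x ≠ y) (hx : x ∈ B₁ ∩ B₂) (hy : y ∈ B₁ ∩ B₂) : B₁ = B₂ := by
  have hu := noCutVtx_induce_iff.mpr (h₁.isNonsepSet.union h₂.isNonsepSet hxy hx hy)
  exact (h₁.2 _ Set.subset_union_left hu).trans (h₂.2 _ Set.subset_union_right hu).symm

lemma IsBlockSet.exists_adj {B : Set V} (hB : IsBlockSet G B) {v : V} (hv : v ∈ B) :
    ∃ u ∈ B, G.Adj v u := by
  obtain ⟨⟨z, hzB, hzv⟩⟩ := (hB.isNonsepSet.2 v hv).nonempty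
  have : Nontrivial B := ⟨⟨z, hzB⟩, ⟨v, hv⟩, fun h => hzv (congrArg Subtype.val h)⟩
  obtain ⟨u, hu⟩ := hB.isNonsepSet.1.preconnected.exists_adj_of_nontrivial ⟨v, hv⟩
  exact ⟨u, u.2, hu⟩

lemma exists_walk_notMem_support_of_not_cutVtx {v x y : V} (hv : ¬ CutVtx G v) (hx : x ≠ v)
    (hy : y ≠ v) : ∃ p : G.Walk x y, v ∉ p.support := by
  obtain ⟨q⟩ := (not_not.mp hv).preconnected ⟨x, hx⟩ ⟨y, hy⟩
  refine ⟨q.map (Embedding.induce _).toHom, fun h => ?_⟩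
  obtain ⟨z, -, hz⟩ := List.mem_map.mp ((Walk.support_map _ _) ▸ h)
  exact z.2 hz

/-- The cycle `v x ⋯ y v`, closed up through a path from `x` to `y` avoiding `v`, would force
`B₁` and `B₂` to coincide. -/
lemma IsBlockSet.cutVtx_of_mem_of_mem [Finite V] {B₁ B₂ : Set V} (h₁ : IsBlockSet G B₁)
    (h₂ : IsBlockSet G B₂) (hne : B₁ ≠ B₂) {v : V} (hv₁ : v ∈ B₁) (hv₂ : v ∈ B₂) :
    CutVtx G v := by
  classical
  by_contra hnc
  obtain ⟨x, hx, hvx⟩ := h₁.exists_adj hv₁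
  obtain ⟨y, hy, hvy⟩ := h₂.exists_adj hv₂
  have hxy : x ≠ y := fun h => hne (h₁.eq_of_two_mem h₂ hvx.ne ⟨hv₁, hv₂⟩ ⟨hx, h ▸ hy⟩)
  obtain ⟨p, hvp⟩ := exists_walk_notMem_support_of_not_cutVtx hnc hvx.ne' hvy.ne'
  have hvP : v ∉ p.bypass.support := fun h => hvp (p.support_bypass_subset_support h)
  have hcyc : (Walk.cons hvx (p.bypass.concat hvy.symm)).IsCycle := by
    refine (Walk.cons_isCycle_iff _ _).mpr ⟨p.bypass_isPath.concat hvP _, ?_⟩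
    rw [Walk.edges_concat, List.concat_eq_append, List.mem_append, List.mem_singleton,
      Sym2.eq_iff]
    rintro (he | ⟨rfl, -⟩ | ⟨-, rfl⟩)
    exacts [hvP (p.bypass.fst_mem_support_of_mem_edges he), hvy.ne rfl, hxy rfl]
  obtain ⟨B, hsub, hB⟩ := exists_isBlockSet_superset hcyc.isNonsepSet_support
  have hvB : v ∈ B := hsub (by simp)
  have hxB : x ∈ B := hsub (by simp)
  have hyB : y ∈ B := hsub (by simp)
  exact hne ((hB.eq_of_two_mem h₁ hvx.ne ⟨hvB, hv₁⟩ ⟨hxB, hx⟩).symm.trans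
    (hB.eq_of_two_mem h₂ hvy.ne ⟨hvB, hv₂⟩ ⟨hyB, hy⟩))

lemma IsBlockSet.cutVtx_of_adj [Finite V] {B : Set V} (hB : IsBlockSet G B) {u w : V}
    (hu : u ∈ B) (hw : w ∉ B) (h : G.Adj u w) : CutVtx G u := by
  obtain ⟨B', hB', huB', hwB'⟩ := exists_isBlockSet_of_adj h
  exact hB.cutVtx_of_mem_of_mem hB' (fun e => hw (e ▸ hwB')) hu huB'

lemma IsBlockSet.exists_cutVtx [Finite V] (hconn : G.Connected) {B B' : Set V}
    (hB : IsBlockSet G B) (hB' : IsBlockSet G B') (hne : B ≠ B') : ∃ c ∈ B, CutVtx G c := by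
  have hBu : B ≠ Set.univ := fun h =>
    hne (h.trans (hB'.2 _ (Set.subset_univ _) (h ▸ hB.1)).symm)
  obtain ⟨v, hv⟩ := Set.nonempty_coe_sort.mp hB.isNonsepSet.1.nonempty
  obtain ⟨w, hw⟩ := (Set.ne_univ_iff_exists_notMem B).mp hBu
  obtain ⟨d, -, hd₁, hd₂⟩ := (hconn.preconnected v w).some.exists_boundary_dart B hv hw
  exact ⟨d.fst, hd₁, hB.cutVtx_of_adj hd₁ hd₂ d.adj⟩

lemma SimpleGraph.Walk.IsPath.exists_cutVtx_mem_support [Finite V] {a b : V} {p : G.Walk a b}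
    (hp : p.IsPath) (hab : a ≠ b) (hsep : ¬ ∃ B, IsBlockSet G B ∧ a ∈ B ∧ b ∈ B) :
    ∃ c ∈ p.support, c ≠ a ∧ c ≠ b ∧ CutVtx G c := by
  cases p with
  | nil => exact absurd rfl hab
  | cons hax q =>
    obtain ⟨B, hB, haB, hxB⟩ := exists_isBlockSet_of_adj hax
    have hbB : b ∉ B := fun hb => hsep ⟨B, hB, haB, hb⟩
    obtain ⟨d, hd, hd₁, hd₂⟩ := q.exists_boundary_dart B hxB hbB
    have hdq := q.dart_fst_mem_support_of_mem_darts hd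
    exact ⟨d.fst, by simp [hdq], fun h => ((Walk.cons_isPath_iff _ _).mp hp).2 (h ▸ hdq),
      fun h => hbB (h ▸ hd₁), hB.cutVtx_of_adj hd₁ hd₂ d.adj⟩

lemma ClassB.exists_cutVtx [Finite V] (hG : ClassB G) {B : Set V} (hB : IsBlockSet G B) :
    ∃ c ∈ B, CutVtx G c := by
  obtain ⟨B₁, B₂, h₁, h₂, hne⟩ := hG.2.1
  by_cases h : B = B₁
  · exact hB.exists_cutVtx hG.1.1 h₂ (h ▸ hne)
  · exact hB.exists_cutVtx hG.1.1 h₁ h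

lemma ClassB.ncard_inter_cutSet [Finite V] (hG : ClassB G) {B : Set V} (hB : IsBlockSet G B) :
    (B ∩ cutSet G).ncard = 1 ∨ (B ∩ cutSet G).ncard = 2 := by
  obtain ⟨c, hcB, hc⟩ := hG.exists_cutVtx hB
  have := (Set.ncard_pos (s := B ∩ cutSet G)).mpr ⟨c, hcB, hc⟩
  have := hG.2.2 B hB
  omega

lemma Set.ncard_inter_eq_ncard_inter_sdiff_add {α : Type*} {S T A : Set α} (hA : A.Finite)
    (hTS : T ⊆ S) : (S ∩ A).ncard = (S ∩ (A \ T)).ncard + (A ∩ T).ncard := by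
  have hsplit : S ∩ A = S ∩ (A \ T) ∪ A ∩ T := by
    ext z
    have := @hTS z
    by_cases hz : z ∈ T <;> simp [hz, this]
  rw [hsplit, Set.ncard_union_eq (Set.disjoint_left.mpr fun z h₁ h₂ => h₁.2.2 h₂.2)
    (hA.subset (fun z h => h.2.1)) (hA.subset Set.inter_subset_left)]

section CompBipOn

variable {B V₁ V₂ : Set V}

lemma CompBipOn.symm (h : CompBipOn G B V₁ V₂) : CompBipOn G B V₂ V₁ := by
  obtain ⟨h₁, h₂, hd, hu, hadj⟩ := h
  exact ⟨h₂, h₁, hd.symm, Set.union_comm V₂ V₁ ▸ hu,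
    fun x hx y hy => by rw [hadj x hx y hy, or_comm]⟩

lemma CompBipOn.left_subset (h : CompBipOn G B V₁ V₂) : V₁ ⊆ B :=
  h.2.2.2.1 ▸ Set.subset_union_left

lemma CompBipOn.mem_or_mem (h : CompBipOn G B V₁ V₂) {x : V} (hx : x ∈ B) : x ∈ V₁ ∨ x ∈ V₂ :=
  show x ∈ V₁ ∪ V₂ from h.2.2.2.1 ▸ hx

lemma CompBipOn.adj (h : CompBipOn G B V₁ V₂) {x y : V} (hx : x ∈ V₁) (hy : y ∈ V₂) :
    G.Adj x y :=
  (h.2.2.2.2 x (h.left_subset hx) y (h.symm.left_subset hy)).mpr (Or.inl ⟨hx, hy⟩)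

lemma CompBipOn.mem_right_of_adj (h : CompBipOn G B V₁ V₂) {x y : V} (hx : x ∈ V₁) (hy : y ∈ B)
    (hxy : G.Adj x y) : y ∈ V₂ := by
  rcases (h.2.2.2.2 x (h.left_subset hx) y hy).mp hxy with ⟨-, hy⟩ | ⟨hx', -⟩
  exacts [hy, absurd hx' (Set.disjoint_left.mp h.2.2.1 hx)]

/-- Vertices `0, 1, 2, 3` of the cycle alternate between the parts, and they are distinct since
the cycle cannot close up after three steps. -/
lemma CompBipOn.exists_two_of_isCycle (h : CompBipOn G B V₁ V₂) {v : V} {c : G.Walk v v}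
    (hc : c.IsCycle) (hcB : ∀ z ∈ c.support, z ∈ B) (hv : v ∈ V₁) :
    (∃ x ∈ c.support, ∃ y ∈ c.support, x ≠ y ∧ x ∈ V₁ ∧ y ∈ V₁) ∧
      ∃ x ∈ c.support, ∃ y ∈ c.support, x ≠ y ∧ x ∈ V₂ ∧ y ∈ V₂ := by
  have h3 := hc.three_le_length
  have hB (i : ℕ) : c.getVert i ∈ B := hcB _ (c.getVert_mem_support i)
  have g₁ : c.getVert 1 ∈ V₂ :=
    h.mem_right_of_adj (by rwa [Walk.getVert_zero]) (hB 1) (c.adj_getVert_succ (by omega))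
  have g₂ : c.getVert 2 ∈ V₁ := h.symm.mem_right_of_adj g₁ (hB 2) (c.adj_getVert_succ (by omega))
  have g₃ : c.getVert 3 ∈ V₂ := h.mem_right_of_adj g₂ (hB 3) (c.adj_getVert_succ (by omega))
  have h4 : 4 ≤ c.length := by
    by_contra hlt
    have hv₃ : c.getVert 3 = v := (show c.length = 3 by omega) ▸ c.getVert_length
    exact Set.disjoint_left.mp h.2.2.1 hv (hv₃ ▸ g₃)
  have hne {i j : ℕ} (hij : i < j) (hj : j ≤ 3) : c.getVert i ≠ c.getVert j := fun e =>
    hij.ne (hc.getVert_injOn' (by simp only [Set.mem_ofPred_eq]; omega)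
      (by simp only [Set.mem_ofPred_eq]; omega) e)
  exact ⟨⟨_, c.getVert_mem_support 0, _, c.getVert_mem_support 2, hne (by omega) (by omega),
      by rwa [Walk.getVert_zero], g₂⟩,
    ⟨_, c.getVert_mem_support 1, _, c.getVert_mem_support 3, hne (by omega) le_rfl, g₁, g₃⟩⟩

end CompBipOn

lemma SimpleGraph.dist_add_dist_of_mem_support {a b c : V} {p : G.Walk a b} (hp : p.length = G.dist a b)
    (hc : c ∈ p.support) : G.dist a c + G.dist c b = G.dist a b := by
  classical
  have h₁ := dist_le (p.takeUntil c hc)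
  have h₂ := dist_le (p.dropUntil c hc)
  have hlen := congrArg Walk.length (p.take_spec hc)
  rw [Walk.length_append] at hlen
  have := (p.takeUntil c hc).reachable.dist_triangle_left b
  omega

section AssocSet

variable [Finite V] {S : Set V}

lemma AssocSet.ncard_inter_parts (hG : ClassB G) (hS : AssocSet G S) {B V₁ V₂ : Set V}
    (hB : IsBlockSet G B) (hbip : CompBipOn G B V₁ V₂) :
    0 < (S ∩ V₁).ncard ∧ 0 < (S ∩ V₂).ncard ∧ ((S ∩ V₁).ncard = 1 ∨ (S ∩ V₂).ncard = 1) := by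
  obtain ⟨hK₂, hbig⟩ := hS.2 B V₁ V₂ hB hbip
  by_cases hK : V₁.ncard = 1 ∧ V₂.ncard = 1
  · rw [Set.inter_eq_right.mpr (hbip.left_subset.trans (hK₂ hK)),
      Set.inter_eq_right.mpr (hbip.symm.left_subset.trans (hK₂ hK)), hK.1, hK.2]
    omega
  obtain ⟨hleaf, hbridge⟩ := hbig hK
  have e₁ := Set.ncard_inter_eq_ncard_inter_sdiff_add (T := cutSet G) (Set.toFinite V₁) hS.1
  have e₂ := Set.ncard_inter_eq_ncard_inter_sdiff_add (T := cutSet G) (Set.toFinite V₂) hS.1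
  have hsum : (V₁ ∩ cutSet G).ncard + (V₂ ∩ cutSet G).ncard = (B ∩ cutSet G).ncard := by
    rw [← hbip.2.2.2.1, Set.union_inter_distrib_right, Set.ncard_union_eq
      (hbip.2.2.1.mono Set.inter_subset_left Set.inter_subset_left)]
  rcases hG.ncard_inter_cutSet hB with hk | hk
  · have := hleaf hk
    omega
  obtain ⟨h₂₀, h₀₂, h₁₁⟩ := hbridge hk
  obtain hc | hc | hc : (V₁ ∩ cutSet G).ncard = 2 ∨ (V₂ ∩ cutSet G).ncard = 2 ∨
      ((V₁ ∩ cutSet G).ncard = 1 ∧ (V₂ ∩ cutSet G).ncard = 1) := by omega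
  · obtain ⟨h₂, h₁⟩ := h₂₀ hc
    rw [h₁, Set.ncard_empty] at e₁
    omega
  · obtain ⟨h₁, h₂⟩ := h₀₂ hc
    rw [h₂, Set.ncard_empty] at e₂
    omega
  · have hzero {W : Set V} (hW : W ⊆ B) : (S ∩ (W \ cutSet G)).ncard = 0 := by
      rw [Set.ncard_eq_zero, ← Set.subset_empty_iff, ← h₁₁ hc]
      exact Set.inter_subset_inter_right S (Set.sdiff_subset_sdiff_left hW)
    have := hzero hbip.left_subset
    have := hzero hbip.symm.left_subset
    omega

lemma AssocSet.exists_adj_adj (hG : ClassB G) (hS : AssocSet G S) {B : Set V}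
    (hB : IsBlockSet G B) {a b : V} (ha : a ∈ B) (hb : b ∈ B) (hab : ¬ G.Adj a b) :
    ∃ w ∈ S, G.Adj a w ∧ G.Adj w b := by
  obtain ⟨V₁, V₂, hbip⟩ := hG.1.2 B hB
  wlog haV₁ : a ∈ V₁ generalizing V₁ V₂
  · exact this V₂ V₁ hbip.symm ((hbip.mem_or_mem ha).resolve_left haV₁)
  have hbV₁ : b ∈ V₁ := (hbip.mem_or_mem hb).resolve_right fun hbV₂ => hab (hbip.adj haV₁ hbV₂)
  obtain ⟨w, hwS, hwV₂⟩ :=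
    Set.nonempty_of_ncard_ne_zero (hS.ncard_inter_parts hG hB hbip).2.1.ne'
  exact ⟨w, hwS, hbip.adj haV₁ hwV₂, (hbip.adj hbV₁ hwV₂).symm⟩

lemma AssocSet.exists_walk_of_mem_block (hG : ClassB G) (hS : AssocSet G S) {B : Set V}
    (hB : IsBlockSet G B) {a b : S} (ha : (a : V) ∈ B) (hb : (b : V) ∈ B) :
    ∃ p : (G.induce S).Walk a b, p.length = G.dist a b := by
  by_cases hab : a = b
  · subst hab
    exact ⟨.nil, by simp⟩
  by_cases hadj : G.Adj a b
  · exact ⟨.cons hadj .nil, by rw [dist_eq_one_iff_adj.mpr hadj]; rfl⟩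
  obtain ⟨w, hwS, haw, hwb⟩ := hS.exists_adj_adj hG hB ha hb hadj
  have hlower := hG.1.1.one_lt_dist_of_ne_of_not_adj (Subtype.coe_ne_coe.mpr hab) hadj
  have hupper := dist_le (Walk.cons haw (Walk.cons hwb Walk.nil))
  refine ⟨.cons (v := ⟨w, hwS⟩) (induce_adj.2 haw) (.cons (induce_adj.2 hwb) .nil), ?_⟩
  simp only [Walk.length_cons, Walk.length_nil] at hupper ⊢
  omega

lemma AssocSet.exists_walk_length_eq_dist (hG : ClassB G) (hS : AssocSet G S) (a b : S) :
    ∃ p : (G.induce S).Walk a b, p.length = G.dist a b := by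
  induction hn : G.dist a b using Nat.strong_induction_on generalizing a b with
  | _ n ih =>
  subst hn
  by_cases hab : a = b
  · subst hab
    exact ⟨.nil, by simp⟩
  by_cases hcom : ∃ B, IsBlockSet G B ∧ (a : V) ∈ B ∧ (b : V) ∈ B
  · obtain ⟨B, hB, ha, hb⟩ := hcom
    exact hS.exists_walk_of_mem_block hG hB ha hb
  obtain ⟨p, hp, hlen⟩ := hG.1.1.exists_path_of_dist a b
  obtain ⟨c, hc, hca, hcb, hcut⟩ :=
    hp.exists_cutVtx_mem_support (Subtype.coe_ne_coe.mpr hab) hcom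
  have hsplit := dist_add_dist_of_mem_support hlen hc
  have hpos₁ := hG.1.1.pos_dist_of_ne hca.symm
  have hpos₂ := hG.1.1.pos_dist_of_ne hcb
  obtain ⟨p₁, h₁⟩ := ih (G.dist a c) (by omega) a ⟨c, hS.1 c hcut⟩ rfl
  obtain ⟨p₂, h₂⟩ := ih (G.dist c b) (by omega) ⟨c, hS.1 c hcut⟩ b rfl
  exact ⟨p₁.append p₂, by rw [Walk.length_append, h₁, h₂]; exact hsplit⟩

lemma AssocSet.isAcyclic (hG : ClassB G) (hS : AssocSet G S) : (G.induce S).IsAcyclic := by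
  intro v c hc
  obtain ⟨d, hd, hdS⟩ : ∃ d : G.Walk v v, d.IsCycle ∧ ∀ z ∈ d.support, z ∈ S :=
    ⟨c.map (Embedding.induce S).toHom, hc.map (Embedding.induce (G := G) S).injective,
      fun z hz => by
        obtain ⟨y, -, rfl⟩ := List.mem_map.mp ((Walk.support_map _ _) ▸ hz)
        exact y.2⟩
  obtain ⟨B, hsub, hB⟩ := exists_isBlockSet_superset hd.isNonsepSet_support
  obtain ⟨V₁, V₂, hbip⟩ := hG.1.2 B hB
  wlog hv : (v : V) ∈ V₁ generalizing V₁ V₂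
  · exact this V₂ V₁ hbip.symm ((hbip.mem_or_mem (hsub d.start_mem_support)).resolve_left hv)
  obtain ⟨⟨x₁, hx₁, y₁, hy₁, hxy₁, hx₁V, hy₁V⟩, ⟨x₂, hx₂, y₂, hy₂, hxy₂, hx₂V, hy₂V⟩⟩ :=
    hbip.exists_two_of_isCycle hd (fun z hz => hsub hz) hv
  have h₁ : 1 < (S ∩ V₁).ncard :=
    (Set.one_lt_ncard_iff).mpr ⟨x₁, y₁, ⟨hdS x₁ hx₁, hx₁V⟩, ⟨hdS y₁ hy₁, hy₁V⟩, hxy₁⟩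
  have h₂ : 1 < (S ∩ V₂).ncard :=
    (Set.one_lt_ncard_iff).mpr ⟨x₂, y₂, ⟨hdS x₂ hx₂, hx₂V⟩, ⟨hdS y₂ hy₂, hy₂V⟩, hxy₂⟩
  have := (hS.ncard_inter_parts hG hB hbip).2.2
  omega

end AssocSet

lemma SimpleGraph.dist_induce_eq_of_walk {s : Set V} {a b : s} (p : (G.induce s).Walk a b)
    (hp : p.length = G.dist a b) : (G.induce s).dist a b = G.dist a b := by
  obtain ⟨q, hq⟩ := (Walk.reachable p).exists_walk_length_eq_dist
  refine le_antisymm (hp ▸ dist_le p) ?_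
  calc G.dist a b ≤ (q.map (Embedding.induce s).toHom).length := dist_le _
    _ = (G.induce s).dist a b := by rw [Walk.length_map, hq]

theorem stmt_3 {V : Type*} [Fintype V] (G : SimpleGraph V) (hG : ClassB G)
    (S : Set V) (hS : AssocSet G S) :
    (G.induce S).IsTree ∧ ∀ a b : S, (G.induce S).dist a b = G.dist a.1 b.1 := by
  have hwalk := hS.exists_walk_length_eq_dist hG
  obtain ⟨B, -, hB, -⟩ := hG.2.1
  obtain ⟨c, -, hc⟩ := hG.exists_cutVtx hB
  have : Nonempty S := ⟨⟨c, hS.1 c hc⟩⟩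
  refine ⟨⟨⟨fun a b => (hwalk a b).elim fun p _ => p.reachable⟩, hS.isAcyclic hG⟩, fun a b => ?_⟩
  obtain ⟨p, hp⟩ := hwalk a b
  exact dist_induce_eq_of_walk p hp
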